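/- arXiv:2302.07626 — 6 statements merged into one kernel-verified Lean document; each statement's English description precedes it below -/
import Mathlib

section
/- For elements a, b, c, u, v, w, x, y, z of a commutative ring, the identity a·b·c + u·v·w + x·y·z = (a+u+x)(b+v+y)(c+w+z) - [a·y·(c+w+z) + u·b·(w+z+c) + x·v·(z+c+w)] - [a·(b+v)·w + u·(v+y)·z + x·(y+b)·c + (a+u)·v·c + (u+x)·y·w + (x+a)·b·z] - [a·v·z + u·y·c + x·b·w] holds. -/
theorem stmt_0 {R : Type*} [CommRing R] (a b c u v w x y z : R) :
    a * b * c + u * v * w + x * y * z =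
      (a + u + x) * (b + v + y) * (c + w + z)
        - (a * y * (c + w + z) + u * b * (w + z + c) + x * v * (z + c + w))
        - (a * (b + v) * w + u * (v + y) * z + x * (y + b) * c
            + (a + u) * v * c + (u + x) * y * w + (x + a) * b * z)
        - (a * v * z + u * y * c + x * b * w) := by
  ring
end

section
/- Let R be a commutative ring and let a, b, c, u, v, w, x, y, z : Fin n × Fin n → R be families indexed as a_{ij}, b_{jk}, c_{ki}, u_{jk}, v_{ki}, w_{ij}, x_{ki}, y_{ij}, z_{jk}. Then ∑_{i,j,k} (a_{ij} b_{jk} c_{ki} + u_{jk} v_{ki} w_{ij} + x_{ki} y_{ij} z_{jk}) = ∑_{i,j,k} (a_{ij}+u_{jk}+x_{ki})(b_{jk}+v_{ki}+y_{ij})(c_{ki}+w_{ij}+z_{jk}) - ∑_{i,j} a_{ij} y_{ij} ∑_k (c_{ki}+w_{ij}+z_{jk}) - ∑_{j,k} u_{jk} b_{jk} ∑_i (w_{ij}+z_{jk}+c_{ki}) - ∑_{k,i} x_{ki} v_{ki} ∑_j (z_{jk}+c_{ki}+w_{ij}) - ∑_{i,j} a_{ij} (∑_k (b_{jk}+v_{ki}))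 w_{ij} - ∑_{j,k} u_{jk} (∑_i (v_{ki}+y_{ij})) z_{jk} - ∑_{k,i} x_{ki} (∑_j (y_{ij}+b_{jk})) c_{ki} - ∑_{k,i} (∑_j (a_{ij}+u_{jk})) v_{ki} c_{ki} - ∑_{i,j} (∑_k (u_{jk}+x_{ki})) y_{ij} w_{ij} - ∑_{j,k} (∑_i (x_{ki}+a_{ij})) b_{jk} z_{jk} - ∑_{i,j,k} (a_{ij} v_{ki} z_{jk} + u_{jk} y_{ij} c_{ki} + x_{ki} b_{jk} w_{ij}). -/
open Finset

private lemma cyc1 {R : Type*} [CommRing R] {n : ℕ} (F : Fin n → Fin n → Fin n → R) :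
    ∑ j : Fin n, ∑ k : Fin n, ∑ i : Fin n, F i j k
      = ∑ i : Fin n, ∑ j : Fin n, ∑ k : Fin n, F i j k := by
  calc ∑ j : Fin n, ∑ k : Fin n, ∑ i : Fin n, F i j k
      = ∑ j : Fin n, ∑ i : Fin n, ∑ k : Fin n, F i j k :=
        Finset.sum_congr rfl fun _ _ => Finset.sum_comm
    _ = _ := Finset.sum_comm

private lemma cyc2 {R : Type*} [CommRing R] {n : ℕ} (F : Fin n → Fin n → Fin n → R) :
    ∑ k : Fin n, ∑ i : Fin n, ∑ j : Fin n, F i j k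
      = ∑ i : Fin n, ∑ j : Fin n, ∑ k : Fin n, F i j k := by
  calc ∑ k : Fin n, ∑ i : Fin n, ∑ j : Fin n, F i j k
      = ∑ i : Fin n, ∑ k : Fin n, ∑ j : Fin n, F i j k := Finset.sum_comm
    _ = _ := Finset.sum_congr rfl fun _ _ => Finset.sum_comm

theorem stmt_1 {R : Type*} [CommRing R] (n : ℕ)
    (a b c u v w x y z : Fin n × Fin n → R) :
    ∑ i : Fin n, ∑ j : Fin n, ∑ k : Fin n,
        (a (i, j) * b (j, k) * c (k, i) + u (j, k) * v (k, i) * w (i, j)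
          + x (k, i) * y (i, j) * z (j, k)) =
      (∑ i : Fin n, ∑ j : Fin n, ∑ k : Fin n,
          (a (i, j) + u (j, k) + x (k, i)) * (b (j, k) + v (k, i) + y (i, j))
            * (c (k, i) + w (i, j) + z (j, k)))
      - ∑ i : Fin n, ∑ j : Fin n, a (i, j) * y (i, j)
          * ∑ k : Fin n, (c (k, i) + w (i, j) + z (j, k))
      - ∑ j : Fin n, ∑ k : Fin n, u (j, k) * b (j, k)
          * ∑ i : Fin n, (w (i, j) + z (j, k) + c (k, i))
      - ∑ k : Fin n, ∑ i : Fin n, x (k, i) * v (k, i)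
          * ∑ j : Fin n, (z (j, k) + c (k, i) + w (i, j))
      - ∑ i : Fin n, ∑ j : Fin n, a (i, j)
          * (∑ k : Fin n, (b (j, k) + v (k, i))) * w (i, j)
      - ∑ j : Fin n, ∑ k : Fin n, u (j, k)
          * (∑ i : Fin n, (v (k, i) + y (i, j))) * z (j, k)
      - ∑ k : Fin n, ∑ i : Fin n, x (k, i)
          * (∑ j : Fin n, (y (i, j) + b (j, k))) * c (k, i)
      - ∑ k : Fin n, ∑ i : Fin n,
          (∑ j : Fin n, (a (i, j) + u (j, k))) * v (k, i) * c (k, i)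
      - ∑ i : Fin n, ∑ j : Fin n,
          (∑ k : Fin n, (u (j, k) + x (k, i))) * y (i, j) * w (i, j)
      - ∑ j : Fin n, ∑ k : Fin n,
          (∑ i : Fin n, (x (k, i) + a (i, j))) * b (j, k) * z (j, k)
      - ∑ i : Fin n, ∑ j : Fin n, ∑ k : Fin n,
          (a (i, j) * v (k, i) * z (j, k) + u (j, k) * y (i, j) * c (k, i)
            + x (k, i) * b (j, k) * w (i, j)) := by
  simp only [Finset.mul_sum, Finset.sum_mul]
  rw [cyc1 fun i j k => u (j,k) * b (j,k) * (w (i,j) + z (j,k) + c (k,i)),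
      cyc2 fun i j k => x (k,i) * v (k,i) * (z (j,k) + c (k,i) + w (i,j)),
      cyc1 fun i j k => u (j,k) * (v (k,i) + y (i,j)) * z (j,k),
      cyc2 fun i j k => x (k,i) * (y (i,j) + b (j,k)) * c (k,i),
      cyc2 fun i j k => (a (i,j) + u (j,k)) * v (k,i) * c (k,i),
      cyc1 fun i j k => (x (k,i) + a (i,j)) * b (j,k) * z (j,k)]
  simp only [← Finset.sum_sub_distrib]
  exact Finset.sum_congr rfl fun i _ => Finset.sum_congr rfl fun j _ =>
    Finset.sum_congr rfl fun k _ => by ring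
end

section
/- Let F be a field of characteristic 0, n ≥ 1, and g, h ∈ F nonzero with g + h = n. For any families a, b, w, z : Fin n × Fin n → F (indexed a_{ij}, b_{jk}, w_{ij}, z_{jk}) we have ∑_{i,j} a_{ij} ((1/h) ∑_k b_{jk}) (h·w_{ij} + ∑_k z_{jk}) + ∑_{j,k} ((1/g) ∑_i a_{ij}) b_{jk} (g·z_{jk} + ∑_i w_{ij}) = ∑_{i,j,k} (a_{ij} b_{jk} w_{ij} + a_{ij} b_{jk} z_{jk}) + ∑_j ((1/g) ∑_i a_{ij}) ((1/h) ∑_k b_{jk}) (h ∑_i w_{ij} + g ∑_k z_{jk}). -/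
open Finset

private lemma aux1 {F : Type*} [CommRing F] {n : ℕ} (f u : Fin n → F) (c d e : F) :
    ∑ x : Fin n, f x * c * (d * u x + e)
      = c * d * (∑ x : Fin n, f x * u x) + c * e * ∑ x : Fin n, f x := by
  rw [Finset.mul_sum, Finset.mul_sum, ← Finset.sum_add_distrib]
  exact Finset.sum_congr rfl fun x _ => by ring

private lemma aux2 {F : Type*} [CommRing F] {n : ℕ} (f u : Fin n → F) (c d e : F) :
    ∑ x : Fin n, c * f x * (d * u x + e)
      = c * d * (∑ x : Fin n, f x * u x) + c * e * ∑ x : Fin n, f x := by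
  rw [Finset.mul_sum, Finset.mul_sum, ← Finset.sum_add_distrib]
  exact Finset.sum_congr rfl fun x _ => by ring

private lemma aux3 {F : Type*} [CommRing F] {n : ℕ} (f u : Fin n → F) (c d : F) :
    ∑ x : Fin n, (c * f x * d + c * (f x * u x))
      = c * d * (∑ x : Fin n, f x) + c * ∑ x : Fin n, f x * u x := by
  rw [Finset.mul_sum, Finset.mul_sum, ← Finset.sum_add_distrib]
  exact Finset.sum_congr rfl fun x _ => by ring

private lemma aux4 {F : Type*} [CommRing F] {n : ℕ} (v f : Fin n → F) (c d : F) :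
    ∑ x : Fin n, (v x * c + f x * d)
      = c * (∑ x : Fin n, v x) + d * ∑ x : Fin n, f x := by
  rw [Finset.mul_sum, Finset.mul_sum, ← Finset.sum_add_distrib]
  exact Finset.sum_congr rfl fun x _ => by ring

theorem stmt_5 {F : Type*} [Field F] [CharZero F] (n : ℕ) (hn : 1 ≤ n)
    (g h : F) (hg : g ≠ 0) (hh : h ≠ 0) (hgh : g + h = (n : F))
    (a b w z : Fin n × Fin n → F) :
    (∑ i : Fin n, ∑ j : Fin n,
        a (i, j) * ((1 / h) * ∑ k : Fin n, b (j, k))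
          * (h * w (i, j) + ∑ k : Fin n, z (j, k)))
      + (∑ j : Fin n, ∑ k : Fin n,
          ((1 / g) * ∑ i : Fin n, a (i, j)) * b (j, k)
            * (g * z (j, k) + ∑ i : Fin n, w (i, j))) =
    (∑ i : Fin n, ∑ j : Fin n, ∑ k : Fin n,
        (a (i, j) * b (j, k) * w (i, j) + a (i, j) * b (j, k) * z (j, k)))
      + ∑ j : Fin n,
          ((1 / g) * ∑ i : Fin n, a (i, j)) * ((1 / h) * ∑ k : Fin n, b (j, k))
            * (h * ∑ i : Fin n, w (i, j) + g * ∑ k : Fin n, z (j, k)) := by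
  rw [Finset.sum_comm (s := Finset.univ) (t := Finset.univ)
      (f := fun i j => a (i, j) * ((1 / h) * ∑ k : Fin n, b (j, k))
          * (h * w (i, j) + ∑ k : Fin n, z (j, k))),
      Finset.sum_comm (s := Finset.univ) (t := Finset.univ)
      (f := fun i j => ∑ k : Fin n,
        (a (i, j) * b (j, k) * w (i, j) + a (i, j) * b (j, k) * z (j, k))),
      ← Finset.sum_add_distrib, ← Finset.sum_add_distrib]
  refine Finset.sum_congr rfl fun j _ => ?_
  rw [aux1 (fun i => a (i, j)) (fun i => w (i, j))
        ((1 / h) * ∑ k : Fin n, b (j, k)) h (∑ k : Fin n, z (j, k)),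
      aux2 (fun k => b (j, k)) (fun k => z (j, k))
        ((1 / g) * ∑ i : Fin n, a (i, j)) g (∑ i : Fin n, w (i, j))]
  have l3 : (∑ i : Fin n, ∑ k : Fin n,
        (a (i, j) * b (j, k) * w (i, j) + a (i, j) * b (j, k) * z (j, k)))
      = (∑ k : Fin n, b (j, k)) * (∑ i : Fin n, a (i, j) * w (i, j))
        + (∑ k : Fin n, b (j, k) * z (j, k)) * (∑ i : Fin n, a (i, j)) := by
    have inner : ∀ i : Fin n, (∑ k : Fin n,
          (a (i, j) * b (j, k) * w (i, j) + a (i, j) * b (j, k) * z (j, k)))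
        = (a (i, j) * w (i, j)) * (∑ k : Fin n, b (j, k))
          + a (i, j) * (∑ k : Fin n, b (j, k) * z (j, k)) := by
      intro i
      have := aux3 (fun k => b (j, k)) (fun k => z (j, k)) (a (i, j)) (w (i, j))
      calc (∑ k : Fin n,
            (a (i, j) * b (j, k) * w (i, j) + a (i, j) * b (j, k) * z (j, k)))
          = ∑ k : Fin n, (a (i, j) * b (j, k) * w (i, j)
              + a (i, j) * (b (j, k) * z (j, k))) :=
            Finset.sum_congr rfl fun k _ => by ring
        _ = _ := by rw [this]
    rw [Finset.sum_congr rfl fun i _ => inner i,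
        aux4 (fun i => a (i, j) * w (i, j)) (fun i => a (i, j))
          (∑ k : Fin n, b (j, k)) (∑ k : Fin n, b (j, k) * z (j, k))]
  rw [l3]
  field_simp
  ring
end

section
/- Let F be a field of characteristic 0, n a natural number with n ≥ 2, and set g = 1, h = n - 1, q = n (all as elements of F). Define, for families a,b,c,u,v,w,x,y,z : Fin n × Fin n → F (indexed a_{ij}, b_{jk}, c_{ki}, u_{jk}, v_{ki}, w_{ij}, x_{ki}, y_{ij}, z_{jk}), the correction terms T'_0 = ∑_i [((1/h)∑_j a_{ij} + (1/g)∑_k x_{ki})((1/h)∑_j y_{ij} + (1/g)∑_k v_{ki})(g∑_j w_{ij} + h∑_k c_{ki}) + ((q-g)/h²)∑_j a_{ij} ∑_j y_{ij} ∑_j w_{ij} + ((q-h)/g²)∑_k x_{ki} ∑_k v_{ki} ∑_k c_{ki}], with T'_1 and T'_2 defined by the cyclic analogues given in the paper. Then the full trilinear identity holds: ∑_{i,j,k}(a_{ij}b_{jk}c_{ki} + u_{jk}v_{ki}w_{ij} + x_{ki}y_{ij}z_{jk}) = ∑_{i,j,k}[(a_{ij}+u_{jk}+x_{ki})(b_{jk}+v_{ki}+y_{ij})(c_{ki}+w_{ij}+z_{jk})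 - a_{ij}v_{ki}z_{jk} - u_{jk}y_{ij}c_{ki} - x_{ki}b_{jk}w_{ij}] + T'_0 + T'_1 + T'_2 - ∑_{i,j}(a_{ij} + (1/g)∑_k x_{ki})(y_{ij} + (1/g)∑_k v_{ki})(g·w_{ij} + ∑_k c_{ki}) - ∑_{i,j}(a_{ij} + (1/h)∑_k u_{jk})(y_{ij} + (1/h)∑_k b_{jk})(h·w_{ij} + ∑_k z_{jk}) - ∑_{j,k}(u_{jk} + (1/g)∑_i a_{ij})(b_{jk} + (1/g)∑_i y_{ij})(g·z_{jk} + ∑_i w_{ij}) - ∑_{j,k}(u_{jk} + (1/h)∑_i x_{ki})(b_{jk} + (1/h)∑_i v_{ki})(h·z_{jk} + ∑_i c_{ki}) - ∑_{k,i}(x_{ki} + (1/g)∑_j u_{jk})(v_{ki} + (1/g)∑_j b_{jk})(g·c_{ki} + ∑_j z_{jk}) - ∑_{k,i}(x_{ki} + (1/h)∑_j a_{ij})(v_{ki} + (1/h)∑_j y_{ij})(h·c_{ki} + ∑_j w_{ij}). -/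
open Finset

/-- Left-hand side of the Laderman–Pan–Sha trilinear identity:
`Trace(ABC + UVW + XYZ)`. -/
def lpsLHS {F : Type*} [Field F] (n : ℕ)
    (a b c u v w x y z : Fin n × Fin n → F) : F :=
  ∑ i : Fin n, ∑ j : Fin n, ∑ k : Fin n,
    (a (i, j) * b (j, k) * c (k, i) + u (j, k) * v (k, i) * w (i, j)
      + x (k, i) * y (i, j) * z (j, k))

/-- Correction term `T'₀` with parameters `g`, `h`, `q`. -/
def lpsT0 {F : Type*} [Field F] (n : ℕ) (g h q : F)
    (a b c u v w x y z : Fin n × Fin n → F) : F :=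
  ∑ i : Fin n,
    (((1 / h) * ∑ j : Fin n, a (i, j) + (1 / g) * ∑ k : Fin n, x (k, i))
        * ((1 / h) * ∑ j : Fin n, y (i, j) + (1 / g) * ∑ k : Fin n, v (k, i))
        * (g * ∑ j : Fin n, w (i, j) + h * ∑ k : Fin n, c (k, i))
      + ((q - g) / h ^ 2) * (∑ j : Fin n, a (i, j)) * (∑ j : Fin n, y (i, j))
          * (∑ j : Fin n, w (i, j))
      + ((q - h) / g ^ 2) * (∑ k : Fin n, x (k, i)) * (∑ k : Fin n, v (k, i))
          * (∑ k : Fin n, c (k, i)))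

/-- Correction term `T'₁` with parameters `g`, `h`, `q`. -/
def lpsT1 {F : Type*} [Field F] (n : ℕ) (g h q : F)
    (a b c u v w x y z : Fin n × Fin n → F) : F :=
  ∑ j : Fin n,
    (((1 / g) * ∑ i : Fin n, a (i, j) + (1 / h) * ∑ k : Fin n, u (j, k))
        * ((1 / g) * ∑ i : Fin n, y (i, j) + (1 / h) * ∑ k : Fin n, b (j, k))
        * (h * ∑ i : Fin n, w (i, j) + g * ∑ k : Fin n, z (j, k))
      + ((q - h) / g ^ 2) * (∑ i : Fin n, a (i, j)) * (∑ i : Fin n, y (i, j))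
          * (∑ i : Fin n, w (i, j))
      + ((q - g) / h ^ 2) * (∑ k : Fin n, u (j, k)) * (∑ k : Fin n, b (j, k))
          * (∑ k : Fin n, z (j, k)))

/-- Correction term `T'₂` with parameters `g`, `h`, `q`. -/
def lpsT2 {F : Type*} [Field F] (n : ℕ) (g h q : F)
    (a b c u v w x y z : Fin n × Fin n → F) : F :=
  ∑ k : Fin n,
    (((1 / h) * ∑ i : Fin n, x (k, i) + (1 / g) * ∑ j : Fin n, u (j, k))
        * ((1 / h) * ∑ i : Fin n, v (k, i) + (1 / g) * ∑ j : Fin n, b (j, k))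
        * (g * ∑ i : Fin n, c (k, i) + h * ∑ j : Fin n, z (j, k))
      + ((q - g) / h ^ 2) * (∑ i : Fin n, x (k, i)) * (∑ i : Fin n, v (k, i))
          * (∑ i : Fin n, c (k, i))
      + ((q - h) / g ^ 2) * (∑ j : Fin n, u (j, k)) * (∑ j : Fin n, b (j, k))
          * (∑ j : Fin n, z (j, k)))

/-- Right-hand side of the Laderman–Pan–Sha trilinear identity (1), with
parameters `g`, `h` and correction parameter `q`. -/
def lpsRHS {F : Type*} [Field F] (n : ℕ) (g h q : F)
    (a b c u v w x y z : Fin n × Fin n → F) : F :=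
  (∑ i : Fin n, ∑ j : Fin n, ∑ k : Fin n,
      ((a (i, j) + u (j, k) + x (k, i)) * (b (j, k) + v (k, i) + y (i, j))
          * (c (k, i) + w (i, j) + z (j, k))
        - a (i, j) * v (k, i) * z (j, k) - u (j, k) * y (i, j) * c (k, i)
        - x (k, i) * b (j, k) * w (i, j)))
    + lpsT0 n g h q a b c u v w x y z
    + lpsT1 n g h q a b c u v w x y z
    + lpsT2 n g h q a b c u v w x y z
    - ∑ i : Fin n, ∑ j : Fin n,
        (a (i, j) + (1 / g) * ∑ k : Fin n, x (k, i))
          * (y (i, j) + (1 / g) * ∑ k : Fin n, v (k, i))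
          * (g * w (i, j) + ∑ k : Fin n, c (k, i))
    - ∑ i : Fin n, ∑ j : Fin n,
        (a (i, j) + (1 / h) * ∑ k : Fin n, u (j, k))
          * (y (i, j) + (1 / h) * ∑ k : Fin n, b (j, k))
          * (h * w (i, j) + ∑ k : Fin n, z (j, k))
    - ∑ j : Fin n, ∑ k : Fin n,
        (u (j, k) + (1 / g) * ∑ i : Fin n, a (i, j))
          * (b (j, k) + (1 / g) * ∑ i : Fin n, y (i, j))
          * (g * z (j, k) + ∑ i : Fin n, w (i, j))
    - ∑ j : Fin n, ∑ k : Fin n,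
        (u (j, k) + (1 / h) * ∑ i : Fin n, x (k, i))
          * (b (j, k) + (1 / h) * ∑ i : Fin n, v (k, i))
          * (h * z (j, k) + ∑ i : Fin n, c (k, i))
    - ∑ k : Fin n, ∑ i : Fin n,
        (x (k, i) + (1 / g) * ∑ j : Fin n, u (j, k))
          * (v (k, i) + (1 / g) * ∑ j : Fin n, b (j, k))
          * (g * c (k, i) + ∑ j : Fin n, z (j, k))
    - ∑ k : Fin n, ∑ i : Fin n,
        (x (k, i) + (1 / h) * ∑ j : Fin n, a (i, j))
          * (v (k, i) + (1 / h) * ∑ j : Fin n, y (i, j))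
          * (h * c (k, i) + ∑ j : Fin n, w (i, j))


/-! Expanding the products on the right-hand side, the monomials `a b c`, `u v w`, `x y z` give
`lpsLHS` and the others fall into three blocks, one per summation index: the block of `i` is
made of the monomials of `(a + x) (y + v) (w + c)`, whose letters all carry the index `i`
(each of `a y w`, `u b z`, `x v c` lies in two blocks and is kept only in one). For fixed `i`,
this block, `T'₀` and the two correction sums built from the same letters are polynomials in the
partial sums over `j` and over `k`, and with `q = n` they add up to `(n - g) ∑ a y w - h ∑ x v c`.
For `g = 1`, `h = n - 1` the three blocks telescope to zero. -/

section
variable {R ι κ : Type*} [CommRing R] [Fintype ι] [Fintype κ]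

theorem sum_add_mul_add_mul_mul_add (f₁ f₂ f₃ : ι → R) (c₁ c₂ d c₃ : R) :
    ∑ j, (f₁ j + c₁) * (f₂ j + c₂) * (d * f₃ j + c₃)
      = d * ∑ j, f₁ j * f₂ j * f₃ j + c₃ * ∑ j, f₁ j * f₂ j + d * c₂ * ∑ j, f₁ j * f₃ j
        + d * c₁ * ∑ j, f₂ j * f₃ j + c₂ * c₃ * ∑ j, f₁ j + c₁ * c₃ * ∑ j, f₂ j
        + d * c₁ * c₂ * ∑ j, f₃ j + Fintype.card ι * (c₁ * c₂ * c₃) := by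
  have (j : ι) : (f₁ j + c₁) * (f₂ j + c₂) * (d * f₃ j + c₃)
      = d * (f₁ j * f₂ j * f₃ j) + c₃ * (f₁ j * f₂ j) + d * c₂ * (f₁ j * f₃ j)
        + d * c₁ * (f₂ j * f₃ j) + c₂ * c₃ * f₁ j + c₁ * c₃ * f₂ j + d * c₁ * c₂ * f₃ j
        + c₁ * c₂ * c₃ := by ring
  simp only [this, sum_add_distrib, ← mul_sum, sum_const, card_univ, nsmul_eq_mul]
  ring

theorem sum_sum_add_mul_add_mul_add_sub (p q r : ι → R) (s t e : κ → R) :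
    ∑ j, ∑ k, ((p j + s k) * (q j + t k) * (r j + e k) - s k * t k * e k)
      = Fintype.card κ * ∑ j, p j * q j * r j
        + (∑ j, p j) * ∑ k, t k * e k + (∑ j, p j * q j) * ∑ k, e k
        + (∑ j, p j * r j) * ∑ k, t k + (∑ j, q j) * ∑ k, s k * e k
        + (∑ j, r j) * ∑ k, s k * t k + (∑ j, q j * r j) * ∑ k, s k := by
  have (j : ι) (k : κ) : (p j + s k) * (q j + t k) * (r j + e k) - s k * t k * e k
      = p j * q j * r j + p j * (t k * e k) + p j * q j * e k + p j * r j * t k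
        + q j * (s k * e k) + r j * (s k * t k) + q j * r j * s k := by ring
  simp only [this, sum_add_distrib, sum_const, card_univ, nsmul_eq_mul, ← mul_sum, ← sum_mul]

end

section
variable {F : Type*} [Field F] {n : ℕ} {g h : F}

theorem lps_shared_index_term (hg : g ≠ 0) (hh : h ≠ 0) (p q r s t e : Fin n → F) :
    ∑ j, ∑ k, ((p j + s k) * (q j + t k) * (r j + e k) - s k * t k * e k)
      + ((1 / h * ∑ j, p j + 1 / g * ∑ k, s k) * (1 / h * ∑ j, q j + 1 / g * ∑ k, t k)
            * (g * ∑ j, r j + h * ∑ k, e k)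
          + (n - g) / h ^ 2 * (∑ j, p j) * (∑ j, q j) * (∑ j, r j)
          + (n - h) / g ^ 2 * (∑ k, s k) * (∑ k, t k) * (∑ k, e k))
      - ∑ j, (p j + 1 / g * ∑ k, s k) * (q j + 1 / g * ∑ k, t k) * (g * r j + ∑ k, e k)
      - ∑ k, (s k + 1 / h * ∑ j, p j) * (t k + 1 / h * ∑ j, q j) * (h * e k + ∑ j, r j)
      = (n - g) * ∑ j, p j * q j * r j - h * ∑ k, s k * t k * e k := by
  rw [sum_sum_add_mul_add_mul_add_sub, sum_add_mul_add_mul_mul_add,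
    sum_add_mul_add_mul_mul_add, Fintype.card_fin]
  field_simp
  ring

theorem lps_shared_index_sum (hg : g ≠ 0) (hh : h ≠ 0) (p q r s t e : Fin n → Fin n → F) :
    ∑ i, ∑ j, ∑ k, ((p i j + s k i) * (q i j + t k i) * (r i j + e k i) - s k i * t k i * e k i)
      + ∑ i, ((1 / h * ∑ j, p i j + 1 / g * ∑ k, s k i)
            * (1 / h * ∑ j, q i j + 1 / g * ∑ k, t k i) * (g * ∑ j, r i j + h * ∑ k, e k i)
          + (n - g) / h ^ 2 * (∑ j, p i j) * (∑ j, q i j) * (∑ j, r i j)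
          + (n - h) / g ^ 2 * (∑ k, s k i) * (∑ k, t k i) * (∑ k, e k i))
      - ∑ i, ∑ j, (p i j + 1 / g * ∑ k, s k i) * (q i j + 1 / g * ∑ k, t k i)
          * (g * r i j + ∑ k, e k i)
      - ∑ k, ∑ i, (s k i + 1 / h * ∑ j, p i j) * (t k i + 1 / h * ∑ j, q i j)
          * (h * e k i + ∑ j, r i j)
      = (n - g) * ∑ i, ∑ j, p i j * q i j * r i j - h * ∑ k, ∑ i, s k i * t k i * e k i := by
  conv_lhs => enter [2]; rw [sum_comm]
  conv_rhs => enter [2, 2]; rw [sum_comm]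
  rw [mul_sum, mul_sum, ← sum_sub_distrib, ← sum_add_distrib, ← sum_sub_distrib,
    ← sum_sub_distrib]
  exact sum_congr rfl fun i _ =>
    lps_shared_index_term hg hh (p i) (q i) (r i) (s · i) (t · i) (e · i)

theorem sum_lps_product_expand (a b c u v w x y z : Fin n × Fin n → F) :
    ∑ i : Fin n, ∑ j : Fin n, ∑ k : Fin n,
      ((a (i, j) + u (j, k) + x (k, i)) * (b (j, k) + v (k, i) + y (i, j))
          * (c (k, i) + w (i, j) + z (j, k))
        - a (i, j) * v (k, i) * z (j, k) - u (j, k) * y (i, j) * c (k, i)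
        - x (k, i) * b (j, k) * w (i, j))
      = lpsLHS n a b c u v w x y z
        + ∑ i, ∑ j, ∑ k, ((a (i, j) + x (k, i)) * (y (i, j) + v (k, i)) * (w (i, j) + c (k, i))
            - x (k, i) * v (k, i) * c (k, i))
        + ∑ i, ∑ j, ∑ k, ((u (j, k) + a (i, j)) * (b (j, k) + y (i, j)) * (z (j, k) + w (i, j))
            - a (i, j) * y (i, j) * w (i, j))
        + ∑ i, ∑ j, ∑ k, ((x (k, i) + u (j, k)) * (v (k, i) + b (j, k)) * (c (k, i) + z (j, k))
            - u (j, k) * b (j, k) * z (j, k)) := by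
  simp only [lpsLHS, ← sum_add_distrib]
  exact sum_congr rfl fun i _ => sum_congr rfl fun j _ => sum_congr rfl fun k _ => by ring

theorem lpsT1_eq_sum_rotated (q : F) (a b c u v w x y z : Fin n × Fin n → F) :
    lpsT1 n g h q a b c u v w x y z
      = ∑ j : Fin n,
        ((1 / h * ∑ k, u (j, k) + 1 / g * ∑ i, a (i, j))
            * (1 / h * ∑ k, b (j, k) + 1 / g * ∑ i, y (i, j))
            * (g * ∑ k, z (j, k) + h * ∑ i, w (i, j))
          + (q - g) / h ^ 2 * (∑ k, u (j, k)) * (∑ k, b (j, k)) * (∑ k, z (j, k))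
          + (q - h) / g ^ 2 * (∑ i, a (i, j)) * (∑ i, y (i, j)) * (∑ i, w (i, j))) :=
  sum_congr rfl fun _ _ => by ring

end

theorem stmt_6 {F : Type*} [Field F] [CharZero F] (n : ℕ) (hn : 2 ≤ n)
    (g h q : F) (hg : g = 1) (hh : h = (n : F) - 1) (hq : q = (n : F))
    (a b c u v w x y z : Fin n × Fin n → F) :
    lpsLHS n a b c u v w x y z = lpsRHS n g h q a b c u v w x y z := by
  subst hg hh hq
  have hn₁ : (n : F) - 1 ≠ 0 := sub_ne_zero.mpr (Nat.cast_ne_one.mpr (by omega))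
  have block_i := lps_shared_index_sum one_ne_zero hn₁ (fun i j => a (i, j))
    (fun i j => y (i, j)) (fun i j => w (i, j)) (fun k i => x (k, i)) (fun k i => v (k, i))
    (fun k i => c (k, i))
  have block_j := lps_shared_index_sum one_ne_zero hn₁ (fun j k => u (j, k))
    (fun j k => b (j, k)) (fun j k => z (j, k)) (fun i j => a (i, j)) (fun i j => y (i, j))
    (fun i j => w (i, j))
  have block_k := lps_shared_index_sum one_ne_zero hn₁ (fun k i => x (k, i))
    (fun k i => v (k, i)) (fun k i => c (k, i)) (fun j k => u (j, k)) (fun j k => b (j, k))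
    (fun j k => z (j, k))
  rw [sum_comm_cycle] at block_j
  rw [← sum_comm_cycle] at block_k
  rw [lpsRHS, lpsT0, lpsT1_eq_sum_rotated, lpsT2, sum_lps_product_expand]
  linear_combination -block_i - block_j - block_k
end

section
/- There exist a field F (e.g. ℚ), n = 2, g = h = 1, and families a,b,c,u,v,w,x,y,z : Fin 2 × Fin 2 → F such that the Laderman–Pan–Sha trilinear identity with correction parameter q = 1 (i.e. with coefficients (1-g)/h² and (1-h)/g² in the correction terms T'_0, T'_1, T'_2) fails: the left-hand side ∑_{i,j,k}(a_{ij}b_{jk}c_{ki} + u_{jk}v_{ki}w_{ij} + x_{ki}y_{ij}z_{jk}) differs from the right-hand side of identity (1) instantiated with q = 1. -/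
open Finset

theorem stmt_7 :
    ∃ a b c u v w x y z : Fin 2 × Fin 2 → ℚ,
      lpsLHS 2 a b c u v w x y z ≠ lpsRHS 2 1 1 1 a b c u v w x y z := by
  refine ⟨fun _ => 1, fun _ => 1, fun _ => 1, fun _ => 1, fun _ => 1,
    fun _ => 1, fun _ => 1, fun _ => 1, fun _ => 1, ?_⟩
  simp only [lpsLHS, lpsRHS, lpsT0, lpsT1, lpsT2, Fin.sum_univ_two]
  norm_num
end

section
/- The undesired cross terms produced by the six sums in group (6) are exactly reduced by the product parts of the correction terms: for a field F of characteristic 0, n ≥ 1, nonzero g, h ∈ F with g + h = n, and families a, b, w, z : Fin n × Fin n → F, ∑_j ((1/g)∑_i a_{ij})·((1/h)∑_k b_{jk})·(h∑_i w_{ij} + g∑_k z_{jk}) = ∑_{i,j,k} a_{ij}·b_{jk}·((1/h)∑_{k'} z_{jk'} + (1/g)∑_{i'} w_{i'j}). -/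
open Finset

theorem stmt_14 {F : Type*} [Field F] [CharZero F] (n : ℕ) (hn : 1 ≤ n)
    (g h : F) (hg : g ≠ 0) (hh : h ≠ 0) (hgh : g + h = (n : F))
    (a b w z : Fin n × Fin n → F) :
    ∑ j : Fin n,
        ((1 / g) * ∑ i : Fin n, a (i, j)) * ((1 / h) * ∑ k : Fin n, b (j, k))
          * (h * ∑ i : Fin n, w (i, j) + g * ∑ k : Fin n, z (j, k)) =
      ∑ i : Fin n, ∑ j : Fin n, ∑ k : Fin n,
        a (i, j) * b (j, k)
          * ((1 / h) * ∑ k' : Fin n, z (j, k') + (1 / g) * ∑ i' : Fin n, w (i', j)) := by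
  rw [Finset.sum_comm]
  refine Finset.sum_congr rfl fun j _ => ?_
  simp only [Finset.mul_sum, Finset.sum_mul] at *
  rw [Finset.sum_comm]
  refine Finset.sum_congr rfl fun i _ => ?_
  refine Finset.sum_congr rfl fun k _ => ?_
  simp only [← Finset.mul_sum]
  set W := ∑ x : Fin n, w (x, j) with hW
  set Z := ∑ x : Fin n, z (j, x) with hZ
  field_simp
  ring
end
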